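/- If G is a finite simple graph with at least one edge and χ(G) = Δ(G) + 1, then vs_χ(G) = ivs_χ(G), i.e., the chromatic vertex stability number of G equals its independent chromatic vertex stability number. -/

import Mathlib

open SimpleGraph

/-- The chromatic number of a graph, as a natural number (for finite graphs this
is the usual chromatic number). -/
noncomputable def chromNum {V : Type*} (G : SimpleGraph V) : ℕ :=
  sInf {n : ℕ | G.Colorable n}

/-- The maximum degree Δ(G) of a finite graph. -/
noncomputable def maxDeg {V : Type*} [Fintype V] (G : SimpleGraph V) : ℕ :=
  Finset.univ.sup fun v => Nat.card (G.neighborSet v)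

/-- The chromatic vertex stability number: the minimum number of vertices whose
deletion results in a graph with chromatic number χ(G) − 1. -/
noncomputable def vsChi {V : Type*} [Fintype V] (G : SimpleGraph V) : ℕ :=
  sInf {k : ℕ | ∃ S : Finset V, S.card = k ∧
    chromNum (G.induce ((S : Set V))ᶜ) = chromNum G - 1}

/-- The independent chromatic vertex stability number: the minimum size of an
independent set of vertices whose deletion results in a graph with chromatic
number χ(G) − 1. -/
noncomputable def ivsChi {V : Type*} [Fintype V] (G : SimpleGraph V) : ℕ :=
  sInf {k : ℕ | ∃ S : Finset V, S.card = k ∧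
    (∀ u ∈ S, ∀ v ∈ S, ¬ G.Adj u v) ∧
    chromNum (G.induce ((S : Set V))ᶜ) = chromNum G - 1}

/-- The chromatic edge stability number: the minimum number of edges whose
deletion results in a graph with chromatic number χ(G) − 1. -/
noncomputable def esChi {V : Type*} (G : SimpleGraph V) : ℕ :=
  sInf {k : ℕ | ∃ F : Finset (Sym2 V), ↑F ⊆ G.edgeSet ∧ F.card = k ∧
    chromNum (G.deleteEdges ↑F) = chromNum G - 1}

/-! A smallest set `S` with `χ(G - S) = χ(G) - 1 = Δ(G)` is automatically independent.
If `u, v ∈ S` were adjacent, then `u` has at most `Δ - 1` neighbours in `G - S`, since one of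
its at most `Δ` neighbours is `v`; so a `Δ`-colouring of `G - S` extends greedily to `u`, and
`S \ {u}` would be a smaller deleting set. -/

namespace SimpleGraph

variable {V : Type*} {G : SimpleGraph V}

theorem Colorable.induce_insert {s : Set V} {u : V} {n : ℕ} (h : (G.induce s).Colorable n)
    (hu : (G.neighborSet u ∩ s).encard < n) : (G.induce (insert u s)).Colorable n := by
  classical
  obtain ⟨c⟩ := h
  have hn : 0 < n := by exact_mod_cast (zero_le : (0 : ℕ∞) ≤ _).trans_lt hu
  let f : V → Fin n := fun w => if hw : w ∈ s then c ⟨w, hw⟩ else ⟨0, hn⟩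
  obtain ⟨a, ha⟩ : ∃ a, a ∉ f '' (G.neighborSet u ∩ s) := by
    refine (Set.ne_univ_iff_exists_notMem _).mp fun huniv => ?_
    have := (Set.encard_image_le f _).trans_lt hu
    simp [huniv, Set.encard_univ, ENat.card_eq_coe_fintype_card] at this
  have hfree : ∀ x (hx : x ∈ s), G.Adj u x → c ⟨x, hx⟩ ≠ a := fun x hx hux hca =>
    ha ⟨x, ⟨hux, hx⟩, by simp [f, hx, hca]⟩
  refine ⟨Coloring.mk (fun x => if hx : x.1 ∈ s then c ⟨x, hx⟩ else a) ?_⟩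
  rintro ⟨x, hx⟩ ⟨y, hy⟩ hxy
  rw [induce_adj] at hxy
  by_cases hxs : x ∈ s <;> by_cases hys : y ∈ s <;> simp only [hxs, hys, dite_true, dite_false]
  · exact c.valid (induce_adj.mpr hxy)
  · obtain rfl : y = u := (Set.mem_insert_iff.mp hy).resolve_right hys
    exact hfree x hxs hxy.symm
  · obtain rfl : x = u := (Set.mem_insert_iff.mp hx).resolve_right hxs
    exact (hfree y hys hxy).symm
  · obtain rfl : x = u := (Set.mem_insert_iff.mp hx).resolve_right hxs
    obtain rfl : y = x := (Set.mem_insert_iff.mp hy).resolve_right hys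
    exact (G.irrefl hxy).elim

theorem colorable_chromNum [Finite V] (G : SimpleGraph V) : G.Colorable (chromNum G) := by
  have := Fintype.ofFinite V
  exact Nat.sInf_mem (⟨_, G.colorable_of_fintype⟩ : {n | G.Colorable n}.Nonempty)

theorem chromNum_le_of_colorable {n : ℕ} (h : G.Colorable n) : chromNum G ≤ n :=
  Nat.sInf_le h

theorem chromNum_induce_mono [Finite V] {s t : Set V} (h : s ⊆ t) :
    chromNum (G.induce s) ≤ chromNum (G.induce t) :=
  chromNum_le_of_colorable <| (colorable_chromNum _).of_hom (G.induceHomOfLE h).toHom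

theorem card_neighborSet_le_maxDeg [Fintype V] (u : V) : Nat.card (G.neighborSet u) ≤ maxDeg G :=
  Finset.le_sup (f := fun v => Nat.card (G.neighborSet v)) (Finset.mem_univ u)

theorem encard_neighborSet_inter_lt_maxDeg [Fintype V] {s : Set V} {u v : V} (huv : G.Adj u v)
    (hv : v ∉ s) : (G.neighborSet u ∩ s).encard < maxDeg G := by
  have hsub : insert v (G.neighborSet u ∩ s) ⊆ G.neighborSet u :=
    Set.insert_subset huv Set.inter_subset_left
  have hle := (Set.encard_le_encard hsub).trans_eq (Set.toFinite _).cast_ncard_eq.symm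
  rw [Set.encard_insert_of_notMem fun h => hv h.2, add_comm, ← Nat.card_coe_set_eq] at hle
  rw [← ENat.add_one_le_iff (Set.toFinite _).encard_lt_top.ne, add_comm]
  exact hle.trans (by exact_mod_cast card_neighborSet_le_maxDeg u)

theorem chromNum_induce_insert_eq [Fintype V] {t : Set V} {u v : V}
    (ht : chromNum (G.induce t) = maxDeg G) (huv : G.Adj u v) (hv : v ∉ t) :
    chromNum (G.induce (insert u t)) = maxDeg G :=
  le_antisymm
    (chromNum_le_of_colorable <|
      (ht ▸ colorable_chromNum _).induce_insert (encard_neighborSet_inter_lt_maxDeg huv hv))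
    (ht ▸ chromNum_induce_mono (Set.subset_insert u t))

end SimpleGraph

theorem Nat.sInf_eq_of_subset_of_isLeast_mem {A B : Set ℕ} (hBA : B ⊆ A)
    (h : ∀ a, IsLeast A a → a ∈ B) : sInf B = sInf A := by
  rcases A.eq_empty_or_nonempty with rfl | hA
  · rw [Set.subset_empty_iff.mp hBA]
  · exact IsLeast.csInf_eq ⟨h _ ⟨Nat.sInf_mem hA, fun b hb => Nat.sInf_le hb⟩,
      fun b hb => Nat.sInf_le (hBA hb)⟩

theorem stmt_0 {V : Type*} [Fintype V] (G : SimpleGraph V)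
    (hchi : chromNum G = maxDeg G + 1) :
    vsChi G = ivsChi G := by
  classical
  have hΔ : chromNum G - 1 = maxDeg G := by omega
  refine (Nat.sInf_eq_of_subset_of_isLeast_mem ?_ ?_).symm
  · rintro k ⟨S, hk, -, hS⟩
    exact ⟨S, hk, hS⟩
  rintro k ⟨⟨S, hcard, hS⟩, hmin⟩
  refine ⟨S, hcard, fun u hu v hv huv => ?_, hS⟩
  have hle : k ≤ S.card - 1 := hmin ⟨S.erase u, Finset.card_erase_of_mem hu, by
    rw [Finset.coe_erase, Set.compl_sdiff, Set.singleton_union, hΔ]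
    exact chromNum_induce_insert_eq (hΔ ▸ hS) huv fun h => h hv⟩
  have := Finset.card_pos.mpr ⟨u, hu⟩
  omega
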